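/- For any two distinct points p₁, p₂ ∈ ℝ², there exists exactly one stable tropical line passing through both of them. -/

import Mathlib

/-!
The vertex of the stable line is given by the tropical cross product of `(p.1, p.2, 0)` and
`(q.1, q.2, 0)`. The point `p` lies on the line with this vertex because, with `s = p.1 + p.2`,
`α = p.1 + q.2` and `β = p.2 + q.1`, the membership condition becomes: the maximum of
`max s α`, `max s β`, `max α β` is attained twice, and whichever of `s, α, β` is largest occurs
in two of them.

If `q` lies on the line with vertex `p`, the cross product returns `p` (and symmetrically).
Otherwise, on any line through both points they sit on different rays, which pins down the vertex.
Two stable lines with vertices `p` and `q` would put each point on the other's line, which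
forces `p = q`.
-/

/-- The half-ray from `v` in direction `d`. -/
def tropRay (v d : ℝ × ℝ) : Set (ℝ × ℝ) := {p | ∃ t : ℝ, 0 ≤ t ∧ p = v + t • d}

/-- The tropical line with vertex `v`. -/
def tropLine (v : ℝ × ℝ) : Set (ℝ × ℝ) :=
  tropRay v (-1, 0) ∪ tropRay v (0, -1) ∪ tropRay v (1, 1)

/-- A stable tropical line through `p₁, p₂`. -/
def StableThrough (p₁ p₂ v : ℝ × ℝ) : Prop :=
  p₁ ∈ tropLine v ∧ p₂ ∈ tropLine v ∧
    ((∀ w : ℝ × ℝ, p₁ ∈ tropLine w ∧ p₂ ∈ tropLine w → w = v) ∨ v = p₁ ∨ v = p₂)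

/-- The tropical line with vertex `v` is the locus where `max (x - v.1) (y - v.2) 0` is
attained at least twice. -/
def MaxAttainedTwice (x y z : ℝ) : Prop :=
  (x = y ∧ z ≤ x) ∨ (y = z ∧ x ≤ y) ∨ (z = x ∧ y ≤ z)

theorem MaxAttainedTwice.sub_const {x y z : ℝ} (h : MaxAttainedTwice x y z) (d : ℝ) :
    MaxAttainedTwice (x - d) (y - d) (z - d) := by
  unfold MaxAttainedTwice at *
  grind

theorem maxAttainedTwice_max (a b c : ℝ) :
    MaxAttainedTwice (max a b) (max a c) (max b c) := by
  unfold MaxAttainedTwice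
  grind

theorem mem_tropLine_iff {p v : ℝ × ℝ} :
    p ∈ tropLine v ↔ MaxAttainedTwice (p.1 - v.1) (p.2 - v.2) 0 := by
  simp only [tropLine, tropRay, Set.mem_union, Set.mem_ofPred_eq, MaxAttainedTwice, Prod.ext_iff,
    Prod.fst_add, Prod.snd_add, Prod.smul_mk, smul_eq_mul, mul_neg, mul_one, mul_zero, add_zero]
  constructor
  · rintro ((⟨t, ht, h1, h2⟩ | ⟨t, ht, h1, h2⟩) | ⟨t, ht, h1, h2⟩) <;> grind
  · rintro (⟨h, h'⟩ | ⟨h, h'⟩ | ⟨h, h'⟩)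
    · exact Or.inr ⟨p.1 - v.1, h', by ring, by linarith⟩
    · exact Or.inl (Or.inl ⟨v.1 - p.1, by linarith, by ring, by linarith⟩)
    · exact Or.inl (Or.inr ⟨v.2 - p.2, by linarith, by linarith, by ring⟩)

theorem eq_of_mem_tropLine_of_mem_tropLine {p q : ℝ × ℝ} (hq : q ∈ tropLine p)
    (hp : p ∈ tropLine q) : p = q := by
  rw [mem_tropLine_iff, MaxAttainedTwice] at hp hq
  grind [Prod.ext_iff]

/-- The tropical cross product of `(p.1, p.2, 0)` and `(q.1, q.2, 0)` is the coefficient vector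
`(a, b, c)` of the tropical linear form `max (a + x) (b + y) c` vanishing at `p` and `q`;
the vertex of its line is `(c - a, c - b)`. -/
def tropVertex (p q : ℝ × ℝ) : ℝ × ℝ :=
  (max (p.1 + q.2) (p.2 + q.1) - max p.2 q.2, max (p.1 + q.2) (p.2 + q.1) - max p.1 q.1)

theorem tropVertex_comm (p q : ℝ × ℝ) : tropVertex p q = tropVertex q p := by
  simp only [tropVertex, max_comm, add_comm]

theorem mem_tropLine_tropVertex_left (p q : ℝ × ℝ) : p ∈ tropLine (tropVertex p q) := by
  rw [mem_tropLine_iff]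
  convert (maxAttainedTwice_max (p.1 + p.2) (p.1 + q.2) (p.2 + q.1)).sub_const
    (max (p.1 + q.2) (p.2 + q.1)) using 1
  · rw [tropVertex, ← add_max]; ring
  · rw [tropVertex, add_comm p.1 p.2, ← add_max]; ring
  · ring

theorem mem_tropLine_tropVertex_right (p q : ℝ × ℝ) : q ∈ tropLine (tropVertex p q) :=
  tropVertex_comm p q ▸ mem_tropLine_tropVertex_left q p

theorem tropVertex_eq_left {p q : ℝ × ℝ} (h : q ∈ tropLine p) : tropVertex p q = p := by
  rw [mem_tropLine_iff, MaxAttainedTwice] at h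
  simp only [tropVertex, Prod.ext_iff]
  grind

/-- Split according to the rays of `tropLine w` carrying `p` and `q`: on different rays they
determine `w`, on a common ray one of them lies on the line with vertex at the other. -/
theorem eq_tropVertex_or_mem_tropLine {p q w : ℝ × ℝ} (hp : p ∈ tropLine w)
    (hq : q ∈ tropLine w) : w = tropVertex p q ∨ q ∈ tropLine p ∨ p ∈ tropLine q := by
  simp only [mem_tropLine_iff, MaxAttainedTwice, tropVertex, Prod.ext_iff] at *
  grind

theorem stableThrough_tropVertex (p q : ℝ × ℝ) : StableThrough p q (tropVertex p q) := by
  refine ⟨mem_tropLine_tropVertex_left p q, mem_tropLine_tropVertex_right p q, ?_⟩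
  by_cases hqp : q ∈ tropLine p
  · exact Or.inr (Or.inl (tropVertex_eq_left hqp))
  by_cases hpq : p ∈ tropLine q
  · exact Or.inr (Or.inr (tropVertex_comm p q ▸ tropVertex_eq_left hpq))
  exact Or.inl fun w ⟨hp, hq⟩ => (eq_tropVertex_or_mem_tropLine hp hq).resolve_right (by tauto)

theorem StableThrough.eq {p q v w : ℝ × ℝ} (hv : StableThrough p q v)
    (hw : StableThrough p q w) : v = w := by
  obtain ⟨hpv, hqv, hv | rfl | rfl⟩ := hv
  · exact (hv w ⟨hw.1, hw.2.1⟩).symm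
  all_goals
    obtain ⟨hpw, hqw, hw | rfl | rfl⟩ := hw
    · exact hw _ ⟨hpv, hqv⟩
  · rfl
  · exact eq_of_mem_tropLine_of_mem_tropLine hqv hpw
  · exact (eq_of_mem_tropLine_of_mem_tropLine hqw hpv).symm
  · rfl

theorem existsUnique_stable_line_general (p₁ p₂ : ℝ × ℝ) :
    ∃! v : ℝ × ℝ, StableThrough p₁ p₂ v :=
  ⟨tropVertex p₁ p₂, stableThrough_tropVertex p₁ p₂,
    fun _ hw => hw.eq (stableThrough_tropVertex p₁ p₂)⟩

/-- Through any two distinct points of the tropical plane there passes exactly one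
stable tropical line. -/
theorem existsUnique_stable_line (p₁ p₂ : ℝ × ℝ) (h : p₁ ≠ p₂) :
    ∃! v : ℝ × ℝ, StableThrough p₁ p₂ v :=
  existsUnique_stable_line_general p₁ p₂
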